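/- arXiv:2308.04080 — 4 statements merged into one kernel-verified Lean document; each statement's English description precedes it below -/
import Mathlib

section
/- Existence of a step-level reorganization (combinatorial content of Lemma 1, 'Reorg exists', Step 1): For every tick-schedule (c_j)_{j∈J} with capacity function b there exists an assignment σ : J → ℕ of jobs to steps such that: (i) for every step s, the set of jobs j with σ(j) = s is finite and has cardinality at most b(s); (ii) every job j satisfies ρ_j ≤ σ(j) ≤ δ_j; (iii) for all jobs j₁, j₂, if l_{j₁} < f_{j₂} then σ(j₁) ≤ σ(j₂); and (iv) for all jobs j₁, j₂, j₃, if l_{j₁} < f_{j₂} and l_{j₂} < f_{j₃} then σ(j₁) < σ(j₃). -/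
/-- A tick-schedule on a set `J` of jobs: each job `j` computes its `K` VDF units at
strictly increasing ticks `c j 0 < c j 1 < … < c j (K-1)`, subject to the concurrency
constraint that at every tick `t` at most `b (t / K)` units (over all jobs) are computed,
where `b` is the per-step capacity (number of shells / Byzantine nodes) and tick `t`
belongs to step `t / K`. -/
structure TickSchedule (K : ℕ) (J : Type*) (b : ℕ → ℕ) where
  /-- there is at least one unit per VDF -/
  hK : 0 < K
  /-- `c j u` is the tick at which the `u`-th unit of job `j`'s VDF is computed -/
  c : J → Fin K → ℕ
  /-- the ticks of each job's units are strictly increasing -/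
  strict : ∀ j, StrictMono (c j)
  /-- concurrency: at any tick `t`, at most `b (t / K)` units are computed -/
  conc : ∀ (t : ℕ) (S : Finset (J × Fin K)),
    (∀ p ∈ S, c p.1 p.2 = t) → S.card ≤ b (t / K)

namespace TickSchedule

variable {K : ℕ} {J : Type*} {b : ℕ → ℕ}

/-- `f j`: the first tick of job `j` (its first Get() call). -/
def f (ts : TickSchedule K J b) (j : J) : ℕ := ts.c j ⟨0, ts.hK⟩

/-- `l j`: the last tick of job `j` (its `K`-th Get() call). -/
def l (ts : TickSchedule K J b) (j : J) : ℕ :=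
  ts.c j ⟨K - 1, Nat.sub_lt ts.hK Nat.one_pos⟩

/-- `ρ j`: the release step of job `j`, the step of its first tick. -/
def ρ (ts : TickSchedule K J b) (j : J) : ℕ := ts.f j / K

/-- `δ j`: the deadline step of job `j`, the step of its last tick. -/
def δ (ts : TickSchedule K J b) (j : J) : ℕ := ts.l j / K

end TickSchedule

section Aux

variable {K : ℕ} {J : Type*} {b : ℕ → ℕ}

open Finset in
/-- first tick plus offset lower-bounds later ticks -/
lemma aux_first_add (ts : TickSchedule K J b) (j : J) (n : ℕ) (hn : n < K) :
    ts.f j + n ≤ ts.c j ⟨n, hn⟩ := by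
  induction n with
  | zero => simp [TickSchedule.f]
  | succ m ih =>
    have hm : m < K := Nat.lt_of_succ_lt hn
    have h1 : ts.c j ⟨m, hm⟩ < ts.c j ⟨m + 1, hn⟩ := ts.strict j (by simp [Fin.lt_def])
    have := ih hm
    omega

lemma aux_f_le_c (ts : TickSchedule K J b) (j : J) (u : Fin K) : ts.f j ≤ ts.c j u := by
  have := aux_first_add ts j u.val u.isLt
  have : ts.f j + u.val ≤ ts.c j u := by simpa using this
  omega

lemma aux_c_le_l (ts : TickSchedule K J b) (j : J) (u : Fin K) : ts.c j u ≤ ts.l j := by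
  have : u ≤ (⟨K - 1, Nat.sub_lt ts.hK Nat.one_pos⟩ : Fin K) := by
    simp only [Fin.le_def]
    omega
  exact (ts.strict j).monotone this

lemma aux_f_add_le_l (ts : TickSchedule K J b) (j : J) : ts.f j + (K - 1) ≤ ts.l j :=
  aux_first_add ts j (K - 1) (Nat.sub_lt ts.hK Nat.one_pos)

end Aux

/-- Existence of a step-level reorganization (Lemma 1, Step 1): for every tick-schedule
there is an assignment `σ` of jobs to steps such that (i) at most `b s` jobs are placed
in each step `s`, (ii) each job is placed between its release step and its deadline
step, (iii) if job `j₁` finishes before job `j₂` starts then `j₁` is placed no later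
than `j₂`, and (iv) if `j₁` finishes before `j₂` starts and `j₂` finishes before `j₃`
starts, then `j₁` is placed strictly before `j₃`. -/
theorem reorg_assignment_exists {K : ℕ} {J : Type*} {b : ℕ → ℕ}
    (ts : TickSchedule K J b) :
    ∃ σ : J → ℕ,
      (∀ s : ℕ, {j : J | σ j = s}.Finite ∧ {j : J | σ j = s}.ncard ≤ b s) ∧
      (∀ j : J, ts.ρ j ≤ σ j ∧ σ j ≤ ts.δ j) ∧
      (∀ j₁ j₂ : J, ts.l j₁ < ts.f j₂ → σ j₁ ≤ σ j₂) ∧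
      (∀ j₁ j₂ j₃ : J, ts.l j₁ < ts.f j₂ → ts.l j₂ < ts.f j₃ → σ j₁ < σ j₃) := by
  classical
  have hK := ts.hK
  -- slots of a step: `b s` copies of step `s`
  set slots : ℕ → Finset (ℕ × ℕ) := fun s => (Finset.range (b s)).image (fun i => (s, i))
    with hslots
  have hslots_card : ∀ s, (slots s).card = b s := fun s => by
    rw [hslots, Finset.card_image_of_injective _ (fun a a' h => by simpa using h),
      Finset.card_range]
  have hslots_fst : ∀ s p, p ∈ slots s → p.1 = s := by
    intro s p hp
    simp only [hslots, Finset.mem_image, Finset.mem_range] at hp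
    obtain ⟨i, _, rfl⟩ := hp
    rfl
  have hslots_disj : ∀ s s' : ℕ, s ≠ s' → Disjoint (slots s) (slots s') := by
    intro s s' hne
    rw [Finset.disjoint_left]
    intro p hp hp'
    exact hne ((hslots_fst s p hp).symm.trans (hslots_fst s' p hp'))
  -- steps of a job: the steps containing one of its units
  set steps : J → Finset ℕ := fun j => Finset.univ.image (fun u : Fin K => ts.c j u / K)
    with hsteps
  set t : J → Finset (ℕ × ℕ) := fun j => (steps j).biUnion slots with ht
  -- Hall's condition via counting units
  have hall : ∀ A : Finset J, A.card ≤ (A.biUnion t).card := by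
    intro A
    set S : Finset ℕ := A.biUnion steps with hS
    have hBU : A.biUnion t = S.biUnion slots := by
      rw [hS, ht, Finset.biUnion_biUnion]
    have hcardBU : (A.biUnion t).card = ∑ s ∈ S, b s := by
      rw [hBU, Finset.card_biUnion (fun x _ y _ hxy => hslots_disj x y hxy)]
      exact Finset.sum_congr rfl fun s _ => hslots_card s
    -- the units of jobs in A
    set U : Finset (J × Fin K) := A ×ˢ (Finset.univ : Finset (Fin K)) with hU
    have hUcard : U.card = A.card * K := by
      rw [hU, Finset.card_product, Finset.card_univ, Fintype.card_fin]
    -- ticks of steps in S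
    set T : Finset ℕ := S.biUnion (fun s => Finset.Ico (s * K) ((s + 1) * K)) with hT
    have hmemT : ∀ p ∈ U, ts.c p.1 p.2 ∈ T := by
      intro p hp
      rw [hU, Finset.mem_product] at hp
      rw [hT, Finset.mem_biUnion]
      refine ⟨ts.c p.1 p.2 / K, ?_, ?_⟩
      · rw [hS, Finset.mem_biUnion]
        exact ⟨p.1, hp.1, by rw [hsteps]; exact Finset.mem_image_of_mem _ (Finset.mem_univ _)⟩
      · rw [Finset.mem_Ico]
        constructor
        · exact Nat.div_mul_le_self _ _
        · rw [← Nat.div_lt_iff_lt_mul hK]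
          omega
    have hUle : U.card ≤ ∑ tick ∈ T, b (tick / K) := by
      rw [Finset.card_eq_sum_card_fiberwise hmemT]
      refine Finset.sum_le_sum fun tick _ => ?_
      exact ts.conc tick _ (fun p hp => (Finset.mem_filter.mp hp).2)
    have hTsum : ∑ tick ∈ T, b (tick / K) = K * ∑ s ∈ S, b s := by
      rw [hT, Finset.sum_biUnion]
      · rw [Finset.mul_sum]
        refine Finset.sum_congr rfl fun s _ => ?_
        have : ∀ tick ∈ Finset.Ico (s * K) ((s + 1) * K), b (tick / K) = b s := by
          intro tick htick
          rw [Finset.mem_Ico] at htick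
          congr 1
          exact Nat.div_eq_of_lt_le htick.1 htick.2
        rw [Finset.sum_congr rfl this, Finset.sum_const, Nat.card_Ico, smul_eq_mul]
        have : (s + 1) * K - s * K = K := by ring_nf; omega
        rw [this, mul_comm]
      · intro x hx y hy hxy
        simp only [Finset.disjoint_left, Finset.mem_Ico]
        intro a ha ha'
        rcases Nat.lt_or_ge x y with h | h
        · have : x + 1 ≤ y := h
          nlinarith [ha.2, ha'.1]
        · have hyx : y < x := lt_of_le_of_ne h (Ne.symm hxy)
          have : y + 1 ≤ x := hyx
          nlinarith [ha.1, ha'.2]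
    have : A.card * K ≤ K * ∑ s ∈ S, b s := by
      rw [← hUcard, ← hTsum]; exact hUle
    rw [hcardBU]
    rw [mul_comm] at this
    exact Nat.le_of_mul_le_mul_left this hK
  obtain ⟨g, hginj, hgmem⟩ := (Finset.all_card_le_biUnion_card_iff_exists_injective t).mp hall
  -- the assignment: the step coordinate of the matched slot
  refine ⟨fun j => (g j).1, ?_, ?_, ?_, ?_⟩
  · -- (i): capacity
    intro s
    have hmaps : ∀ j ∈ {j : J | (g j).1 = s}, g j ∈ (slots s : Set (ℕ × ℕ)) := by
      intro j hj
      have := hgmem j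
      rw [ht, Finset.mem_biUnion] at this
      obtain ⟨s', _, hs'⟩ := this
      have : (g j).1 = s' := hslots_fst s' _ hs'
      have hss : s' = s := by rw [← this]; exact hj
      rw [hss] at hs'
      exact hs'
    have hsub : {j : J | (g j).1 = s} ⊆ g ⁻¹' ↑(slots s) := fun j hj => hmaps j hj
    have hfin : {j : J | (g j).1 = s}.Finite :=
      Set.Finite.subset ((slots s).finite_toSet.preimage hginj.injOn) hsub
    refine ⟨hfin, ?_⟩
    calc {j : J | (g j).1 = s}.ncard = (g '' {j : J | (g j).1 = s}).ncard :=
          (Set.ncard_image_of_injective _ hginj).symm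
      _ ≤ (↑(slots s) : Set (ℕ × ℕ)).ncard := by
          refine Set.ncard_le_ncard ?_ (slots s).finite_toSet
          rintro p ⟨j, hj, rfl⟩
          exact hmaps j hj
      _ = (slots s).card := Set.ncard_coe_finset _
      _ = b s := hslots_card s
  · -- (ii): window
    intro j
    have := hgmem j
    rw [ht, Finset.mem_biUnion] at this
    obtain ⟨s', hs'mem, hs'⟩ := this
    have hfst : (g j).1 = s' := hslots_fst s' _ hs'
    rw [hsteps, Finset.mem_image] at hs'mem
    obtain ⟨u, _, rfl⟩ := hs'mem
    show ts.ρ j ≤ (g j).1 ∧ (g j).1 ≤ ts.δ j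
    rw [hfst]
    constructor
    · exact Nat.div_le_div_right (aux_f_le_c ts j u)
    · exact Nat.div_le_div_right (aux_c_le_l ts j u)
  · -- (iii)
    intro j₁ j₂ h
    have h1 : (g j₁).1 ≤ ts.δ j₁ := by
      have := hgmem j₁
      rw [ht, Finset.mem_biUnion] at this
      obtain ⟨s', hs'mem, hs'⟩ := this
      have hfst : (g j₁).1 = s' := hslots_fst s' _ hs'
      rw [hsteps, Finset.mem_image] at hs'mem
      obtain ⟨u, _, rfl⟩ := hs'mem
      rw [hfst]
      exact Nat.div_le_div_right (aux_c_le_l ts j₁ u)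
    have h2 : ts.ρ j₂ ≤ (g j₂).1 := by
      have := hgmem j₂
      rw [ht, Finset.mem_biUnion] at this
      obtain ⟨s', hs'mem, hs'⟩ := this
      have hfst : (g j₂).1 = s' := hslots_fst s' _ hs'
      rw [hsteps, Finset.mem_image] at hs'mem
      obtain ⟨u, _, rfl⟩ := hs'mem
      rw [hfst]
      exact Nat.div_le_div_right (aux_f_le_c ts j₂ u)
    have : ts.δ j₁ ≤ ts.ρ j₂ := Nat.div_le_div_right h.le
    show (g j₁).1 ≤ (g j₂).1
    omega
  · -- (iv)
    intro j₁ j₂ j₃ h12 h23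
    have h1 : (g j₁).1 ≤ ts.δ j₁ := by
      have := hgmem j₁
      rw [ht, Finset.mem_biUnion] at this
      obtain ⟨s', hs'mem, hs'⟩ := this
      have hfst : (g j₁).1 = s' := hslots_fst s' _ hs'
      rw [hsteps, Finset.mem_image] at hs'mem
      obtain ⟨u, _, rfl⟩ := hs'mem
      rw [hfst]
      exact Nat.div_le_div_right (aux_c_le_l ts j₁ u)
    have h3 : ts.ρ j₃ ≤ (g j₃).1 := by
      have := hgmem j₃
      rw [ht, Finset.mem_biUnion] at this
      obtain ⟨s', hs'mem, hs'⟩ := this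
      have hfst : (g j₃).1 = s' := hslots_fst s' _ hs'
      rw [hsteps, Finset.mem_image] at hs'mem
      obtain ⟨u, _, rfl⟩ := hs'mem
      rw [hfst]
      exact Nat.div_le_div_right (aux_f_le_c ts j₃ u)
    -- δ j₁ ≤ ρ j₂ and ρ j₂ + 1 ≤ ρ j₃
    have hd1 : ts.δ j₁ ≤ ts.ρ j₂ := Nat.div_le_div_right h12.le
    have hfl : ts.f j₂ + (K - 1) ≤ ts.l j₂ := aux_f_add_le_l ts j₂
    have hf3 : ts.f j₂ + K ≤ ts.f j₃ := by omega
    have hρ : ts.ρ j₂ + 1 ≤ ts.ρ j₃ := by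
      have : (ts.f j₂ + K) / K ≤ ts.f j₃ / K := Nat.div_le_div_right hf3
      rwa [Nat.add_div_right _ hK] at this
    have : ts.δ j₁ < ts.ρ j₃ := by omega
    show (g j₁).1 < (g j₃).1
    exact lt_of_le_of_lt h1 (lt_of_lt_of_le this h3)
end

section
/- Claim 2 ('endearly'): In any run of the Reorg greedy assignment on a tick-schedule, every job j is eventually assigned a shell, and σ(j) ≤ δ_j; that is, if the last Get() call (K-th unit) of job j's VDF occurs in step i of the original tick-schedule, then the shell assigned to j is in step i or earlier. -/
/-- Lexicographic order on shells `(step, shell index)`: shell `a` is filled strictly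
before shell `b` by the Reorg greedy assignment iff `ShellLt a b`. -/
def ShellLt (a b : ℕ × ℕ) : Prop := a.1 < b.1 ∨ (a.1 = b.1 ∧ a.2 < b.2)

/-- A run of the Reorg greedy assignment (Algorithm 2).  The algorithm processes steps
`s = 0,1,2,…` in order, maintaining a pool `CandidateVDFs`; at step `s` it first adds
to the pool all jobs with release step `ρ j = s`, and then, while a free shell remains
at step `s` (there are `b s` shells) and the pool is nonempty, it removes from the pool
a job whose last tick is minimal and assigns it the next shell of step `s`.

A run is recorded by the partial assignment `σ` sending each job to the
`(step, shell index)` pair of its shell (`none` if never assigned).  Since steps are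
processed in order and shells within a step in order, "job `v` is assigned strictly
before job `w`" is exactly `ShellLt (σ v) (σ w)`.  The fields are the defining
properties of such a run:
* `shell_valid`: only the `b s` shells of step `s` are used;
* `inj`: each shell is assigned to at most one job;
* `release`: a job enters the pool only at its release step, so it can only be
  assigned a shell at step `ρ j` or later;
* `minimal`: when a job is assigned, its last tick is minimal among the jobs then in
  the pool (jobs already released and not yet assigned);
* `noskip`: a shell of step `s` is left free only if the pool was empty at that point,
  i.e. every job released by step `s` had already been assigned an earlier shell. -/
structure ReorgRun {K : ℕ} {J : Type*} {b : ℕ → ℕ} (ts : TickSchedule K J b) where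
  /-- the shell `(step, index)` assigned to each job, if any -/
  σ : J → Option (ℕ × ℕ)
  shell_valid : ∀ j s k, σ j = some (s, k) → k < b s
  inj : ∀ j j' s k, σ j = some (s, k) → σ j' = some (s, k) → j = j'
  release : ∀ j s k, σ j = some (s, k) → ts.ρ j ≤ s
  minimal : ∀ j s k, σ j = some (s, k) → ∀ j', ts.ρ j' ≤ s →
    (σ j' = none ∨ ∃ s' k', σ j' = some (s', k') ∧ ShellLt (s, k) (s', k')) →
    ts.l j ≤ ts.l j'
  noskip : ∀ s k, k < b s → (∀ j, σ j ≠ some (s, k)) →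
    ∀ j, ts.ρ j ≤ s → ∃ s' k', σ j = some (s', k') ∧ ShellLt (s', k') (s, k)

private lemma sum_div_blocks (K a : ℕ) (f : ℕ → ℕ) :
    ∀ n, ∑ t ∈ Finset.Ico (a*K) ((a+n)*K), f (t / K)
      = ∑ s ∈ Finset.Ico a (a+n), K * f s := by
  intro n
  induction n with
  | zero => simp
  | succ n ih =>
    have hle1 : a * K ≤ (a+n) * K := Nat.mul_le_mul_right _ (Nat.le_add_right _ _)
    have hle2 : (a+n) * K ≤ (a+n+1) * K := Nat.mul_le_mul_right _ (Nat.le_succ _)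
    have e : a + (n+1) = (a+n) + 1 := by omega
    rw [e, ← Finset.sum_Ico_consecutive _ hle1 hle2, ih,
        ← Finset.sum_Ico_consecutive (fun s => K * f s) (Nat.le_add_right a n) (Nat.le_succ _)]
    congr 1
    have hblock : ∀ t ∈ Finset.Ico ((a+n)*K) ((a+n+1)*K), f (t / K) = f (a+n) := by
      intro t ht
      rw [Finset.mem_Ico] at ht
      rw [Nat.div_eq_of_lt_le ht.1 ht.2]
    rw [Finset.sum_congr rfl hblock, Finset.sum_const, Nat.card_Ico]
    have h1 : (a+n+1)*K - (a+n)*K = K := by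
      have : (a+n+1)*K = (a+n)*K + K := by ring
      omega
    have h2 : Finset.Ico (a+n) (a+n+1) = {a+n} := by
      rw [Finset.Ico_add_one_right_eq_Icc, Finset.Icc_self]
    rw [h1, h2, Finset.sum_singleton, smul_eq_mul, mul_comm]

/-- Claim 2 ('endearly'): in any run of the Reorg greedy assignment, every job `j` is
eventually assigned a shell, at step `δ j` (the step of its last Get() call in the
original tick-schedule) or earlier. -/
theorem reorg_endearly {K : ℕ} {J : Type*} {b : ℕ → ℕ}
    {ts : TickSchedule K J b} (run : ReorgRun ts) (j : J) :
    ∃ s k : ℕ, run.σ j = some (s, k) ∧ s ≤ ts.δ j := by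
  classical
  by_contra hcon
  push_neg at hcon
  have hK := ts.hK
  set D := ts.δ j with hDdef
  -- j is in the pool at any step ≤ D
  have hpool : ∀ s, s ≤ D → ∀ k : ℕ,
      (run.σ j = none ∨ ∃ s' k', run.σ j = some (s', k') ∧ ShellLt (s, k) (s', k')) := by
    intro s hs k
    cases h : run.σ j with
    | none => exact Or.inl rfl
    | some p =>
      have hp : run.σ j = some (p.1, p.2) := by rw [h]
      have := hcon p.1 p.2 hp
      refine Or.inr ⟨p.1, p.2, rfl, Or.inl (by omega)⟩
  have hfl : ts.f j ≤ ts.l j := (ts.strict j).monotone (by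
    simp only [Fin.mk_le_mk]; omega)
  have hρδ : ts.ρ j ≤ D := Nat.div_le_div_right hfl
  -- the property Q r
  have hexQ : ∃ r, r ≤ ts.ρ j ∧ ∀ s k, r ≤ s → s ≤ D → k < b s →
      ∃ j', run.σ j' = some (s, k) ∧ ts.l j' ≤ ts.l j := by
    refine ⟨ts.ρ j, le_rfl, ?_⟩
    intro s k hrs hsD hk
    by_cases hfilled : ∃ j', run.σ j' = some (s, k)
    · obtain ⟨j', hσ'⟩ := hfilled
      exact ⟨j', hσ', run.minimal j' s k hσ' j hrs (hpool s hsD k)⟩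
    · push_neg at hfilled
      obtain ⟨s', k', hσ', hlt⟩ := run.noskip s k hk hfilled j hrs
      have := hcon s' k' hσ'
      rcases hlt with h | ⟨h, _⟩ <;> omega
  set r := Nat.find hexQ with hrdef
  obtain ⟨hr_le, hQ⟩ := Nat.find_spec hexQ
  -- every filler of a shell in [r, D] has release step ≥ r
  have hfill_ρ : ∀ s k j', r ≤ s → s ≤ D → run.σ j' = some (s, k) → r ≤ ts.ρ j' := by
    intro s k j' hrs hsD hσ'
    by_contra hlt
    push_neg at hlt
    obtain ⟨j₀, hσ₀, hl₀⟩ := hQ s k hrs hsD (run.shell_valid _ _ _ hσ')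
    have hjj : j₀ = j' := run.inj _ _ _ _ hσ₀ hσ'
    subst hjj
    have hPm : ts.ρ j₀ ≤ ts.ρ j ∧ ∀ s' k', ts.ρ j₀ ≤ s' → s' ≤ D → k' < b s' →
        ∃ j'', run.σ j'' = some (s', k') ∧ ts.l j'' ≤ ts.l j := by
      constructor
      · omega
      · intro s' k' hρs' hs'D hk'
        by_cases hr' : r ≤ s'
        · exact hQ s' k' hr' hs'D hk'
        · push_neg at hr'
          have hs's : s' < s := by omega
          have hpool' : run.σ j₀ = none ∨ ∃ s'' k'', run.σ j₀ = some (s'', k'') ∧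
              ShellLt (s', k') (s'', k'') :=
            Or.inr ⟨s, k, hσ₀, Or.inl hs's⟩
          by_cases hfilled : ∃ j'', run.σ j'' = some (s', k')
          · obtain ⟨j'', hσ''⟩ := hfilled
            exact ⟨j'', hσ'', le_trans (run.minimal j'' s' k' hσ'' j₀ hρs' hpool') hl₀⟩
          · push_neg at hfilled
            obtain ⟨s'', k'', hσ'', hlt'⟩ := run.noskip s' k' hk' hfilled j₀ hρs'
            rw [hσ₀] at hσ''
            have hpe : s = s'' ∧ k = k'' := by
              have := Option.some.inj hσ''
              exact ⟨congrArg Prod.fst this, congrArg Prod.snd this⟩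
            rcases hlt' with h | ⟨h, _⟩ <;> omega
    have := Nat.find_min' hexQ hPm
    omega
  -- the set of shells in steps [r, D]
  set Sh : Finset ((_ : ℕ) × ℕ) := (Finset.Icc r D).sigma (fun s => Finset.range (b s))
    with hShdef
  have hcardSh : Sh.card = ∑ s ∈ Finset.Icc r D, b s := by
    rw [hShdef, Finset.card_sigma]
    simp
  -- the filler function
  set g : ((_ : ℕ) × ℕ) → J := fun p =>
    if h : ∃ j', run.σ j' = some (p.1, p.2) then h.choose else j with hgdef
  have hgspec : ∀ p ∈ Sh, run.σ (g p) = some (p.1, p.2) ∧ ts.l (g p) ≤ ts.l j ∧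
      r ≤ ts.ρ (g p) := by
    intro p hp
    rw [hShdef, Finset.mem_sigma, Finset.mem_Icc, Finset.mem_range] at hp
    obtain ⟨⟨h1, h2⟩, h3⟩ := hp
    obtain ⟨j', hσ', hl'⟩ := hQ p.1 p.2 h1 h2 h3
    have hex2 : ∃ j'', run.σ j'' = some (p.1, p.2) := ⟨j', hσ'⟩
    have hgp : run.σ (g p) = some (p.1, p.2) := by
      rw [hgdef]; simp only [hex2, dif_pos]; exact hex2.choose_spec
    have heq : g p = j' := run.inj _ _ _ _ hgp hσ'
    exact ⟨hgp, heq ▸ hl', hfill_ρ _ _ _ h1 h2 hgp⟩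
  have hginj : Set.InjOn g Sh := by
    intro p hp q hq hpq
    have h1 := (hgspec p hp).1
    have h2 := (hgspec q hq).1
    rw [hpq, h2] at h1
    have := Option.some.inj h1
    have e1 : q.1 = p.1 := congrArg Prod.fst this
    have e2 : q.2 = p.2 := congrArg Prod.snd this
    exact Sigma.ext e1.symm (heq_of_eq e2.symm)
  set A : Finset J := Sh.image g with hAdef
  have hcardA : A.card = Sh.card := Finset.card_image_of_injOn hginj
  have hjA : j ∉ A := by
    intro hj
    rw [hAdef, Finset.mem_image] at hj
    obtain ⟨p, hp, hpj⟩ := hj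
    have h1 := (hgspec p hp).1
    rw [hpj] at h1
    rw [hShdef, Finset.mem_sigma, Finset.mem_Icc] at hp
    have := hcon p.1 p.2 h1
    omega
  -- tick bounds for jobs in insert j A
  have hticks : ∀ j'' ∈ insert j A, ∀ u : Fin K,
      r * K ≤ ts.c j'' u ∧ ts.c j'' u ≤ ts.l j := by
    intro j'' hj'' u
    have hkey : r ≤ ts.ρ j'' ∧ ts.l j'' ≤ ts.l j := by
      rcases Finset.mem_insert.mp hj'' with h | h
      · subst h; exact ⟨hr_le, le_rfl⟩
      · rw [hAdef, Finset.mem_image] at h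
        obtain ⟨p, hp, hpj⟩ := h
        obtain ⟨_, h2, h3⟩ := hgspec p hp
        exact ⟨hpj ▸ h3, hpj ▸ h2⟩
    have hf : r * K ≤ ts.f j'' := (Nat.le_div_iff_mul_le hK).mp hkey.1
    have hlo : ts.f j'' ≤ ts.c j'' u := (ts.strict j'').monotone (by
      simp only [Fin.le_def]; omega)
    have hhi : ts.c j'' u ≤ ts.l j'' := (ts.strict j'').monotone (by
      have := u.isLt
      simp only [Fin.le_def]; omega)
    exact ⟨le_trans hf hlo, le_trans hhi hkey.2⟩
  -- count units
  set U : Finset (J × Fin K) := (insert j A) ×ˢ (Finset.univ : Finset (Fin K)) with hUdef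
  have hcardU : U.card = (Sh.card + 1) * K := by
    rw [hUdef, Finset.card_product, Finset.card_insert_of_notMem hjA, hcardA,
        Finset.card_univ, Fintype.card_fin]
  have hmaps : ∀ p ∈ U, ts.c p.1 p.2 ∈ Finset.Icc (r * K) (ts.l j) := by
    intro p hp
    rw [hUdef, Finset.mem_product] at hp
    have := hticks p.1 hp.1 p.2
    rw [Finset.mem_Icc]
    exact this
  have hcount : U.card ≤ ∑ t ∈ Finset.Icc (r * K) (ts.l j), b (t / K) := by
    rw [Finset.card_eq_sum_card_fiberwise hmaps]
    refine Finset.sum_le_sum ?_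
    intro t _
    exact ts.conc t _ (fun p hp => (Finset.mem_filter.mp hp).2)
  have hlD : ts.l j < (D + 1) * K := by
    have h1 := Nat.div_add_mod (ts.l j) K
    have h2 : ts.l j % K < K := Nat.mod_lt _ hK
    have h3 : (D + 1) * K = K * (ts.l j / K) + K := by
      rw [hDdef]; unfold TickSchedule.δ; ring
    omega
  have hsub : Finset.Icc (r * K) (ts.l j) ⊆ Finset.Ico (r * K) ((D + 1) * K) := by
    intro t ht
    rw [Finset.mem_Icc] at ht
    rw [Finset.mem_Ico]
    omega
  have hbig : ∑ t ∈ Finset.Icc (r * K) (ts.l j), b (t / K)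
      ≤ ∑ t ∈ Finset.Ico (r * K) ((D + 1) * K), b (t / K) :=
    Finset.sum_le_sum_of_subset hsub
  have hre : (D + 1) = r + (D + 1 - r) := by omega
  have hblocks : ∑ t ∈ Finset.Ico (r * K) ((D + 1) * K), b (t / K)
      = K * Sh.card := by
    rw [hre, sum_div_blocks K r b (D + 1 - r), ← hre, Finset.Ico_add_one_right_eq_Icc,
        ← Finset.mul_sum, hcardSh]
  have hfinal : (Sh.card + 1) * K ≤ K * Sh.card := by
    calc (Sh.card + 1) * K = U.card := hcardU.symm
    _ ≤ _ := hcount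
    _ ≤ _ := hbig
    _ = K * Sh.card := hblocks
  have h1 : (Sh.card + 1) * K = Sh.card * K + K := by ring
  have h2 : K * Sh.card = Sh.card * K := by ring
  omega
end

section
/- Claim 3 ('relativeByzantine'): In any run of the Reorg greedy assignment on a tick-schedule, for any two jobs j₁ and j₂ assigned shells at steps s₁ and s₂ respectively, if the last tick of j₁ precedes the first tick of j₂ in the original tick-schedule (l_{j₁} < f_{j₂}), then s₁ ≤ s₂. -/
/-- Claim 3 ('relativeByzantine'): in any run of the Reorg greedy assignment, if jobs
`j₁` and `j₂` are assigned shells at steps `s₁` and `s₂` respectively, and the last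
tick of `j₁` precedes the first tick of `j₂` in the original tick-schedule, then
`s₁ ≤ s₂`. -/
theorem reorg_relativeByzantine {K : ℕ} {J : Type*} {b : ℕ → ℕ}
    {ts : TickSchedule K J b} (run : ReorgRun ts)
    (j₁ j₂ : J) (s₁ k₁ s₂ k₂ : ℕ)
    (h₁ : run.σ j₁ = some (s₁, k₁)) (h₂ : run.σ j₂ = some (s₂, k₂))
    (hlt : ts.l j₁ < ts.f j₂) :
    s₁ ≤ s₂ := by
  by_contra hns
  push_neg at hns
  have hfl : ∀ j : J, ts.f j ≤ ts.l j := fun j =>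
    (ts.strict j).monotone (by simp [Fin.mk_le_mk])
  have hρ1 : ts.ρ j₁ ≤ s₂ := by
    have h1 : ts.ρ j₁ ≤ ts.δ j₁ := Nat.div_le_div_right (hfl j₁)
    have h2 : ts.δ j₁ ≤ ts.ρ j₂ := Nat.div_le_div_right (le_of_lt hlt)
    exact le_trans (le_trans h1 h2) (run.release j₂ s₂ k₂ h₂)
  have hmin : ts.l j₂ ≤ ts.l j₁ :=
    run.minimal j₂ s₂ k₂ h₂ j₁ hρ1 (Or.inr ⟨s₁, k₁, h₁, Or.inl hns⟩)
  have : ts.f j₂ ≤ ts.l j₁ := le_trans (hfl j₂) hmin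
  omega
end

section
/- Observation ('freeshell'): Consider any run of the Reorg greedy assignment on a tick-schedule and any step s whose iteration has completed. (a) If fewer than b(s) jobs are assigned shells in step s (a free shell remains), then every job assigned a shell at a step later than s has release step ρ_j > s; in particular its first unit is computed in a step later than s in the original tick-schedule. (b) If some job v is assigned a shell at step s while some job w is, at the moment of v's assignment, not yet assigned a shell and satisfies l_w < l_v, then ρ_w > s, i.e. w's first unit is computed in a step later than s in the original tick-schedule. -/
/-- Observation ('freeshell'): consider any run of the Reorg greedy assignment and any
step `s`.
(a) If fewer than `b s` jobs are assigned shells in step `s` (a free shell remains at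
step `s`), then every job assigned a shell at a step later than `s` has release step
`ρ j > s`, i.e. its first unit is computed in a step later than `s` in the original
tick-schedule.
(b) If a job `v` is assigned a shell at step `s` while some job `w` is, at the moment
of `v`'s assignment, not yet assigned a shell (`w` is unassigned forever, or assigned
a strictly later shell) and satisfies `l w < l v`, then `ρ w > s`, i.e. `w`'s first
unit is computed in a step later than `s` in the original tick-schedule. -/
theorem reorg_freeshell {K : ℕ} {J : Type*} {b : ℕ → ℕ}
    {ts : TickSchedule K J b} (run : ReorgRun ts) (s : ℕ) :
    (({j : J | ∃ k, run.σ j = some (s, k)}.ncard < b s →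
        ∀ j s' k', run.σ j = some (s', k') → s < s' → s < ts.ρ j)) ∧
    (∀ v w : J, ∀ k : ℕ, run.σ v = some (s, k) →
        (run.σ w = none ∨
          ∃ s' k', run.σ w = some (s', k') ∧ ShellLt (s, k) (s', k')) →
        ts.l w < ts.l v → s < ts.ρ w) := by
  constructor
  · intro hcard j s' k' hj hss'
    by_contra hle
    push_neg at hle
    by_cases hall : ∀ k < b s, ∃ j0, run.σ j0 = some (s, k)
    · exfalso
      choose g hg using hall
      set T : Set J := {j : J | ∃ k, run.σ j = some (s, k)} with hT
      have hsub : Set.range (fun k : Fin (b s) => g k k.2) ⊆ T := by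
        rintro x ⟨k, rfl⟩
        exact ⟨k, hg k k.2⟩
      have hinj : Function.Injective (fun k : Fin (b s) => g k k.2) := by
        intro k1 k2 h
        have h1 := hg k1 k1.2
        have h2 := hg k2 k2.2
        simp only at h
        rw [h] at h1
        rw [h2] at h1
        simp at h1
        exact Fin.ext h1.symm
      have hTfin : T.Finite := by
        have : Set.InjOn (fun j => Classical.choose (j.2 : ∃ k, run.σ j.1 = some (s, k)))
            (Set.univ : Set T) := by
          intro ⟨j1, hj1⟩ _ ⟨j2, hj2⟩ _ h
          have e1 := Classical.choose_spec hj1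
          have e2 := Classical.choose_spec hj2
          simp only at h
          rw [h] at e1
          exact Subtype.ext (run.inj _ _ _ _ e1 e2)
        have hfin : Set.Finite (Set.univ : Set T) := by
          have : ∀ j : T, (Classical.choose (j.2 : ∃ k, run.σ j.1 = some (s, k))) < b s := by
            intro j
            exact run.shell_valid _ _ _ (Classical.choose_spec j.2)
          have himg : (fun j : T => Classical.choose (j.2 : ∃ k, run.σ j.1 = some (s, k))) ''
              Set.univ ⊆ Set.Iio (b s) := by
            rintro x ⟨j, _, rfl⟩
            exact this j
          exact Set.Finite.of_finite_image ((Set.finite_Iio _).subset himg) ‹_›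
        simpa using hfin.image Subtype.val
      have hle2 : b s ≤ T.ncard := by
        calc b s = (Set.range (fun k : Fin (b s) => g k k.2)).ncard := by
              rw [← Set.image_univ, Set.ncard_image_of_injective _ hinj, Set.ncard_univ]
              simp
          _ ≤ T.ncard := Set.ncard_le_ncard hsub hTfin
      omega
    · push_neg at hall
      obtain ⟨k, hk, hno⟩ := hall
      obtain ⟨s'', k'', hσ, hlt⟩ := run.noskip s k hk (fun j0 h => hno j0 h) j hle
      rw [hj] at hσ
      have hs : s'' = s' ∧ k'' = k' := by
        injection hσ with h
        exact ⟨congrArg Prod.fst h.symm, congrArg Prod.snd h.symm⟩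
      rcases hlt with h | ⟨h, _⟩ <;> omega
  · intro v w k hv hw hlw
    by_contra hle
    push_neg at hle
    have := run.minimal v s k hv w hle hw
    omega
end
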